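/- arXiv:1112.4769 — 4 statements merged into one kernel-verified Lean document; each statement's English description precedes it below -/
import Mathlib

section
/- Let k be a field of characteristic zero, λ₀,…,λ_{n-1} distinct in k, m₀,…,m_{n-1} positive integers, and a_{ij} ∈ k given for 0 ≤ j ≤ n-1, 0 ≤ i ≤ m_j - 1. With L_j(x) = ∏_{i≠j}(x-λ_i)^{m_i}/(λ_j-λ_i)^{m_i} and Λ_j the m_j×m_j lower triangular matrix with (i,s)-entry binom(i,s)·L_j^{(i-s)}(λ_j) for s ≤ i and 0 otherwise, define r(x) = ∑_{j=0}^{n-1} X_j Λ_j^{-1} A_j, where X_j is the row vector with entries (x-λ_j)^i L_j(x)/i! for 0 ≤ i ≤ m_j - 1 and A_j is the column vector (a_{0j},…,a_{m_j-1,j})ᵀ. Then r has degree less than ∑ m_i and satisfies r^{(i)}(λ_j) = a_{ij} for all admissible i, j. -/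
open Polynomial

/-- The Hermite–Lagrange basis polynomial `L_t` associated with the node `λ_t`. -/
noncomputable def Lpoly {k : Type*} [Field k] {n : ℕ}
    (lam : Fin n → k) (m : Fin n → ℕ) (t : Fin n) : Polynomial k :=
  ∏ i ∈ Finset.univ.erase t,
    Polynomial.C (((lam t - lam i) ^ m i)⁻¹) * (X - C (lam i)) ^ m i

/-- The lower triangular matrix `Λ_j` with `(i,s)` entry `binom(i,s) L_j^{(i-s)}(λ_j)`. -/
noncomputable def LamMat {k : Type*} [Field k] {n : ℕ}
    (lam : Fin n → k) (m : Fin n → ℕ) (j : Fin n) : Matrix (Fin (m j)) (Fin (m j)) k :=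
  Matrix.of fun i s =>
    if (s : ℕ) ≤ (i : ℕ) then
      ((i : ℕ).choose s : k) * (Polynomial.derivative^[(i : ℕ) - s] (Lpoly lam m j)).eval (lam j)
    else 0

/-!
Proof idea: write `b_{j,i} = (x - λ_j)^i L_j(x) / i!`. For `t ≠ j`, `L_j` is divisible by
`(x - λ_t)^{m_t}`, so every derivative of order `< m_t` of `b_{j,i}` vanishes at `λ_t`. At
`λ_j`, the Leibniz rule gives `b_{j,i}^{(d)}(λ_j) = binom(d,i) L_j^{(d-i)}(λ_j)` (and `0` for
`d < i`), which is the entry `(d, i)` of `Λ_j`. Hence the derivatives of `r` of order `< m_j`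
at `λ_j` are the entries of `Λ_j Λ_j⁻¹ A_j = A_j`; `Λ_j` is invertible being unitriangular.
Each `b_{j,i}` has degree at most `i + ∑_{t ≠ j} m_t < ∑ m_t`.
-/

namespace Polynomial

section CommRing

variable {R : Type*} [CommRing R]

theorem isRoot_iterate_derivative_of_pow_dvd {p : R[X]} {a : R} {m d : ℕ}
    (hp : (X - C a) ^ m ∣ p) (hd : d < m) : (derivative^[d] p).IsRoot a :=
  dvd_iff_isRoot.mp <| (dvd_pow_self _ (Nat.sub_ne_zero_of_lt hd)).trans
    (pow_sub_dvd_iterate_derivative_of_pow_dvd d hp)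

theorem eval_iterate_derivative_X_sub_C_pow_self (a : R) (i s : ℕ) :
    (derivative^[s] ((X - C a) ^ i)).eval a = if s = i then (i.factorial : R) else 0 := by
  rw [iterate_derivative_X_sub_pow, eval_smul, eval_pow, eval_sub, eval_X, eval_C, sub_self]
  rcases lt_trichotomy s i with hlt | rfl | hgt
  · simp [hlt.ne, Nat.sub_ne_zero_of_lt hlt]
  · simp [Nat.descFactorial_self]
  · simp [hgt.ne', Nat.descFactorial_eq_zero_iff_lt.mpr hgt]

theorem eval_iterate_derivative_X_sub_C_pow_mul (a : R) (i d : ℕ) (q : R[X]) :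
    (derivative^[d] ((X - C a) ^ i * q)).eval a =
      if i ≤ d then (d.choose i * i.factorial : R) * (derivative^[d - i] q).eval a else 0 := by
  simp only [mul_comm _ q, iterate_derivative_mul, eval_finsetSum, eval_smul, eval_mul,
    eval_iterate_derivative_X_sub_C_pow_self, mul_ite, mul_zero, smul_ite, smul_zero]
  rw [Finset.sum_ite_eq' (Finset.range d.succ)]
  simp only [Finset.mem_range, Nat.lt_succ_iff, nsmul_eq_mul]
  congr 1
  ring

end CommRing

end Polynomial

section Hermite

variable {k : Type*} [Field k] {n : ℕ} (lam : Fin n → k) (m : Fin n → ℕ)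

/-- The polynomial `(x - λ_j)^i L_j(x) / i!`, the `i`-th entry of the row vector `X_j`. -/
noncomputable def hermiteBasis (j : Fin n) (i : ℕ) : k[X] :=
  C ((i.factorial : k)⁻¹) * (X - C (lam j)) ^ i * Lpoly lam m j

theorem eval_Lpoly_self {lam : Fin n → k} (hlam : Function.Injective lam) (j : Fin n) :
    (Lpoly lam m j).eval (lam j) = 1 := by
  simp only [Lpoly, eval_prod, eval_mul, eval_C, eval_pow, eval_sub, eval_X]
  refine Finset.prod_eq_one fun i hi => inv_mul_cancel₀ (pow_ne_zero _ (sub_ne_zero.2 ?_))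
  exact fun h => (Finset.mem_erase.mp hi).1 (hlam h).symm

theorem pow_dvd_Lpoly {j t : Fin n} (htj : t ≠ j) : (X - C (lam t)) ^ m t ∣ Lpoly lam m j :=
  (dvd_mul_left _ _).trans <|
    Finset.dvd_prod_of_mem _ (Finset.mem_erase.mpr ⟨htj, Finset.mem_univ t⟩)

theorem natDegree_Lpoly_le (j : Fin n) :
    (Lpoly lam m j).natDegree ≤ ∑ t ∈ Finset.univ.erase j, m t :=
  (natDegree_prod_le _ _).trans <| Finset.sum_le_sum fun t _ =>
    (natDegree_C_mul_le _ _).trans (by simp [natDegree_pow])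

theorem natDegree_hermiteBasis_le (j : Fin n) (i : ℕ) :
    (hermiteBasis lam m j i).natDegree ≤ i + ∑ t ∈ Finset.univ.erase j, m t := by
  rw [hermiteBasis, mul_assoc]
  refine (natDegree_C_mul_le _ _).trans (natDegree_mul_le.trans (add_le_add ?_ ?_))
  · simp [natDegree_pow]
  · exact natDegree_Lpoly_le lam m j

theorem hermiteBasis_mem_degreeLT {j : Fin n} {i : ℕ} (hi : i < m j) :
    hermiteBasis lam m j i ∈ degreeLT k (∑ t, m t) := by
  rw [mem_degreeLT, ← Finset.add_sum_erase _ _ (Finset.mem_univ j)]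
  have := natDegree_hermiteBasis_le lam m j i
  exact degree_le_natDegree.trans_lt (by exact_mod_cast (by omega))

theorem eval_iterate_derivative_hermiteBasis_of_ne {j t : Fin n} (htj : t ≠ j) (i : ℕ)
    {d : ℕ} (hd : d < m t) :
    (derivative^[d] (hermiteBasis lam m j i)).eval (lam t) = 0 :=
  isRoot_iterate_derivative_of_pow_dvd ((pow_dvd_Lpoly lam m htj).mul_left _) hd

theorem eval_iterate_derivative_hermiteBasis_self [CharZero k] (j : Fin n) (d i : Fin (m j)) :
    (derivative^[d] (hermiteBasis lam m j i)).eval (lam j) = LamMat lam m j d i := by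
  rw [hermiteBasis, mul_assoc, iterate_derivative_C_mul, eval_mul, eval_C,
    eval_iterate_derivative_X_sub_C_pow_mul, LamMat, Matrix.of_apply]
  split_ifs
  · have : ((i : ℕ).factorial : k) ≠ 0 := Nat.cast_ne_zero.mpr (Nat.factorial_ne_zero _)
    field_simp
  · rw [mul_zero]

theorem LamMat_isLowerTriangular (j : Fin n) : (LamMat lam m j).IsLowerTriangular :=
  fun i s (his : i < s) => if_neg (not_le.mpr his)

theorem det_LamMat {lam : Fin n → k} (hlam : Function.Injective lam) (j : Fin n) :
    (LamMat lam m j).det = 1 := by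
  rw [Matrix.det_of_isLowerTriangular _ (LamMat_isLowerTriangular lam m j)]
  refine Finset.prod_eq_one fun i _ => ?_
  simp [LamMat, eval_Lpoly_self m hlam j]

end Hermite

theorem hermite_interpolation_closed_form_general
    {k : Type*} [Field k] [CharZero k] {n : ℕ}
    (lam : Fin n → k) (hlam : Function.Injective lam)
    (m : Fin n → ℕ)
    (a : ∀ j : Fin n, Fin (m j) → k) :
    let r : Polynomial k :=
      ∑ j, ∑ i : Fin (m j),
        C (((LamMat lam m j)⁻¹).mulVec (fun s => a j s) i) *
          (C (((i : ℕ).factorial : k)⁻¹) * (X - C (lam j)) ^ (i : ℕ) * Lpoly lam m j)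
    r.degree < ((∑ i, m i : ℕ) : WithBot ℕ) ∧
      ∀ (j : Fin n) (i : Fin (m j)),
        (Polynomial.derivative^[(i : ℕ)] r).eval (lam j) = a j i := by
  intro r
  set c : ∀ j, Fin (m j) → k := fun j => ((LamMat lam m j)⁻¹).mulVec (a j)
  have hr : r = ∑ j, ∑ i : Fin (m j), c j i • hermiteBasis lam m j i := by
    simp only [r, c, hermiteBasis, smul_eq_C_mul]
  refine ⟨?_, fun t d => ?_⟩
  · rw [← mem_degreeLT, hr]
    exact Submodule.sum_mem _ fun j _ => Submodule.sum_mem _ fun i _ =>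
      Submodule.smul_mem _ _ (hermiteBasis_mem_degreeLT lam m i.2)
  · have hvanish : ∀ j ≠ t, ∑ i : Fin (m j),
        c j i * (derivative^[d] (hermiteBasis lam m j i)).eval (lam t) = 0 := fun j hjt =>
      Finset.sum_eq_zero fun i _ => by
        rw [eval_iterate_derivative_hermiteBasis_of_ne lam m (Ne.symm hjt) i d.2, mul_zero]
    simp only [hr, iterate_derivative_sum, iterate_derivative_smul, eval_finsetSum, eval_smul,
      smul_eq_mul]
    rw [Finset.sum_eq_single t (fun j _ => hvanish j) (by simp)]
    simp only [eval_iterate_derivative_hermiteBasis_self, mul_comm (c t _)]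
    change (LamMat lam m t).mulVec (((LamMat lam m t)⁻¹).mulVec (a t)) d = a t d
    rw [Matrix.mulVec_mulVec, Matrix.mul_nonsing_inv _ (by simp [det_LamMat m hlam]),
      Matrix.one_mulVec]

theorem hermite_interpolation_closed_form
    {k : Type*} [Field k] [CharZero k] {n : ℕ}
    (lam : Fin n → k) (hlam : Function.Injective lam)
    (m : Fin n → ℕ) (hm : ∀ i, 0 < m i)
    (a : ∀ j : Fin n, Fin (m j) → k) :
    let r : Polynomial k :=
      ∑ j, ∑ i : Fin (m j),
        C (((LamMat lam m j)⁻¹).mulVec (fun s => a j s) i) *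
          (C (((i : ℕ).factorial : k)⁻¹) * (X - C (lam j)) ^ (i : ℕ) * Lpoly lam m j)
    r.degree < ((∑ i, m i : ℕ) : WithBot ℕ) ∧
      ∀ (j : Fin n) (i : Fin (m j)),
        (Polynomial.derivative^[(i : ℕ)] r).eval (lam j) = a j i :=
  hermite_interpolation_closed_form_general lam hlam m a
end

section
/- Let k be a field and g ∈ k[x] a polynomial having a root λ of multiplicity at least 2 in the algebraic closure of k. Then there is no polynomial r ∈ k̄[x] satisfying simultaneously r ≡ 1 (mod g) and r' ≡ 1 (mod g). -/
open Polynomial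

theorem no_simultaneous_interpolant_for_inseparable
    {k : Type*} [Field k] (g : Polynomial k) (lam : AlgebraicClosure k)
    (hmult : (X - C lam) ^ 2 ∣ g.map (algebraMap k (AlgebraicClosure k))) :
    ¬ ∃ r : Polynomial (AlgebraicClosure k),
        (g.map (algebraMap k (AlgebraicClosure k)) ∣ r - 1) ∧
        (g.map (algebraMap k (AlgebraicClosure k)) ∣ Polynomial.derivative r - 1) := by
  rintro ⟨r, h1, h2⟩
  obtain ⟨s, hs⟩ := hmult.trans h1
  obtain ⟨t, ht⟩ := hmult.trans h2
  have hr : r = 1 + (X - C lam) ^ 2 * s := by linear_combination hs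
  have hd : Polynomial.derivative r =
      (X - C lam) * (2 * s + (X - C lam) * Polynomial.derivative s) := by
    rw [hr, sq]
    simp only [derivative_add, derivative_one, derivative_mul, derivative_sub,
      derivative_X, derivative_C]
    ring
  have hdvd : (X - C lam) ∣ (1 : Polynomial (AlgebraicClosure k)) := by
    have : (1 : Polynomial (AlgebraicClosure k)) =
        (X - C lam) * (2 * s + (X - C lam) * Polynomial.derivative s) -
        (X - C lam) ^ 2 * t := by
      rw [← hd]; linear_combination -ht
    rw [this]
    exact dvd_sub (Dvd.intro _ rfl) (dvd_mul_of_dvd_left (dvd_pow_self _ two_ne_zero) t)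
  exact Polynomial.not_isUnit_X_sub_C lam (isUnit_of_dvd_one hdvd)
end

section
/- Let k be a perfect field, g ∈ k[x] separable with distinct roots λ₀,…,λ_{n-1} in the algebraic closure, f ∈ k[x,y] a polynomial in two variables, and m a positive integer. Then there exists a unique r ∈ k[x] of degree less than mn such that f(x,y) ≡ r(x+y) modulo the ideal I of k[x,y] generated by g(x) and y^m. -/
/-!
Reducing `x` modulo `g` identifies `k[x,y]/(g(x), y^m)` with `A[y]/(y^m)`, where `A = k[x]/(g)`
and `ρ ∈ A` is the class of `x`; under this identification `r(x+y)` becomes `r(ρ+y)`.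
By Taylor expansion `g(ρ+y) = g(ρ) + g'(ρ) y + ⋯ = y·w` with `w(0) = g'(ρ)`, a unit because `g`
is separable. Hence `y^m ∣ d(ρ+y)` iff `g^m ∣ d`, and an approximate solution modulo `y^m` can be
corrected by a multiple of `g^m` to one modulo `y^(m+1)`. So `r ↦ r(ρ+y) mod y^m` is surjective
with kernel `(g^m)`, and the remainder modulo `g^m` is the unique solution of degree `< m·deg g`.
-/

open Polynomial

theorem Polynomial.isCoprime_X_of_isUnit_coeff_zero {R : Type*} [CommRing R] {w : R[X]}
    (hw : IsUnit (w.coeff 0)) : IsCoprime X w := by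
  rw [← X_mul_divX_add w, add_comm]
  refine IsCoprime.add_mul_left_right ?_ _
  simpa using (isCoprime_mul_unit_right_right (isUnit_C.mpr hw) X 1).mpr isCoprime_one_right

theorem Polynomial.existsUnique_degree_lt_of_dvd_sub_iff {K : Type*} [Field K] {p : K[X]}
    (hp : p ≠ 0) {S : K[X] → Prop} (hS : ∃ r, S r) (hdvd : ∀ r s, S r → (S s ↔ p ∣ r - s)) :
    ∃! r, r.degree < p.degree ∧ S r := by
  obtain ⟨r, hr⟩ := hS
  have hmod : p ∣ r - r % p := by
    rw [EuclideanDomain.mod_eq_sub_mul_div, sub_sub_cancel]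
    exact dvd_mul_right p _
  refine ⟨r % p, ⟨degree_mod_lt r hp, (hdvd r _ hr).mpr hmod⟩, ?_⟩
  rintro s ⟨hs_deg, hs⟩
  have hdiv : p ∣ s - r % p := by rwa [← hdvd s _ hs, hdvd r _ hr]
  have hlt : (s - r % p).degree < p.degree :=
    (degree_sub_le _ _).trans_lt (max_lt hs_deg (degree_mod_lt r hp))
  exact sub_eq_zero.mp (eq_zero_of_dvd_of_degree_lt hdiv hlt)

theorem Polynomial.mem_span_C_X_pow_iff {R : Type*} [CommRing R] (g : R[X]) (m : ℕ)
    (W : R[X][X]) :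
    W ∈ Ideal.span {C g, X ^ m} ↔ X ^ m ∣ W.map (AdjoinRoot.mk g) := by
  set π := mapRingHom (AdjoinRoot.mk g)
  have hker : RingHom.ker π = Ideal.span {C g} := by
    rw [ker_mapRingHom, show RingHom.ker (AdjoinRoot.mk g) = _ from Ideal.mk_ker, Ideal.map_span,
      Set.image_singleton]
  calc W ∈ Ideal.span {C g, X ^ m}
      ↔ W ∈ Ideal.comap π (Ideal.map π (Ideal.span {X ^ m})) := by
        rw [Ideal.comap_map_of_surjective _ (map_surjective _ AdjoinRoot.mk_surjective),
          ← RingHom.ker_eq_comap_bot, hker, Ideal.span_insert, sup_comm]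
    _ ↔ X ^ m ∣ W.map (AdjoinRoot.mk g) := by
        simp [π, Ideal.map_span, Ideal.mem_span_singleton]

theorem Polynomial.Bivariate.equivMvPolynomial_C {R : Type*} [CommSemiring R] (p : R[X]) :
    equivMvPolynomial R (C p) = aeval (MvPolynomial.X 0) p := by
  induction p using Polynomial.induction_on' with
  | add p q hp hq => simp [hp, hq]
  | monomial n a => simp [← C_mul_X_pow_eq_monomial]

namespace AdjoinRoot

variable {R : Type*} [CommRing R] {g : R[X]}

theorem isUnit_mk_derivative (hg : g.Separable) : IsUnit (mk g (derivative g)) := by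
  obtain ⟨a, b, hab⟩ := hg
  refine IsUnit.of_mul_eq_one_right (mk g b) ?_
  simpa [mk_self] using congrArg (mk g) hab

noncomputable def shiftByRoot (g : R[X]) : R[X] →ₐ[R] (AdjoinRoot g)[X] :=
  aeval (X + C (root g))

theorem shiftByRoot_eq_taylor (r : R[X]) :
    shiftByRoot g r = taylor (root g) (r.map (of g)) := by
  rw [shiftByRoot, taylor_apply, comp_eq_aeval, ← aeval_map_algebraMap (AdjoinRoot g)]
  rfl

theorem coeff_zero_shiftByRoot (r : R[X]) : (shiftByRoot g r).coeff 0 = mk g r := by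
  rw [shiftByRoot_eq_taylor, taylor_coeff_zero, eval_map, ← algebraMap_eq, ← aeval_def, aeval_eq]

theorem coeff_one_shiftByRoot (r : R[X]) :
    (shiftByRoot g r).coeff 1 = mk g (derivative r) := by
  rw [shiftByRoot_eq_taylor, taylor_coeff_one, derivative_map, eval_map, ← algebraMap_eq,
    ← aeval_def, aeval_eq]

theorem exists_shiftByRoot_self_eq_X_mul (hg : g.Separable) :
    ∃ w : (AdjoinRoot g)[X], IsUnit (w.coeff 0) ∧ shiftByRoot g g = X * w := by
  refine ⟨(shiftByRoot g g).divX, ?_, ?_⟩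
  · rw [coeff_divX, zero_add, coeff_one_shiftByRoot]
    exact isUnit_mk_derivative hg
  · conv_lhs => rw [← X_mul_divX_add (shiftByRoot g g)]
    rw [coeff_zero_shiftByRoot, mk_self, C_0, add_zero]

theorem X_pow_dvd_shiftByRoot_iff (hg : g.Separable) {m : ℕ} {d : R[X]} :
    X ^ m ∣ shiftByRoot g d ↔ g ^ m ∣ d := by
  obtain ⟨w, hw, hgw⟩ := exists_shiftByRoot_self_eq_X_mul hg
  constructor
  · induction m generalizing d with
    | zero => simp
    | succ m ih =>
      intro h
      obtain ⟨e, rfl⟩ : g ∣ d := by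
        rw [← mk_eq_zero, ← coeff_zero_shiftByRoot, ← X_dvd_iff]
        exact (dvd_pow_self X m.succ_ne_zero).trans h
      rw [map_mul, hgw, pow_succ', mul_assoc, isRegular_X.left.dvd_cancel_left] at h
      rw [pow_succ']
      exact mul_dvd_mul_left g
        (ih ((isCoprime_X_of_isUnit_coeff_zero hw).pow_left.dvd_of_dvd_mul_left h))
  · rintro ⟨e, rfl⟩
    rw [map_mul, map_pow, hgw, mul_pow, mul_assoc]
    exact dvd_mul_right _ _

theorem exists_X_pow_dvd_sub_shiftByRoot (hg : g.Separable) (m : ℕ) (F : (AdjoinRoot g)[X]) :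
    ∃ r : R[X], X ^ m ∣ F - shiftByRoot g r := by
  induction m with
  | zero => exact ⟨0, by simp⟩
  | succ m ih =>
    obtain ⟨r, G, hG⟩ := ih
    obtain ⟨w, hw, hgw⟩ := exists_shiftByRoot_self_eq_X_mul hg
    -- `q(ρ) = G(0) / w(0)^m` makes the new error term vanish at `y = 0`
    obtain ⟨q, hq⟩ := mk_surjective
      ((((hw.pow m).unit⁻¹ : (AdjoinRoot g)ˣ) : AdjoinRoot g) * G.coeff 0)
    have hsub : F - shiftByRoot g (r + g ^ m * q) = X ^ m * (G - w ^ m * shiftByRoot g q) := by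
      rw [map_add, map_mul, map_pow, hgw]
      linear_combination hG
    refine ⟨r + g ^ m * q, ?_⟩
    rw [hsub, pow_succ]
    refine mul_dvd_mul_left _ (X_dvd_iff.mpr ?_)
    rw [coeff_sub, mul_coeff_zero,
      show (w ^ m).coeff 0 = w.coeff 0 ^ m from map_pow constantCoeff w m,
      coeff_zero_shiftByRoot, hq, ← mul_assoc, IsUnit.mul_val_inv, one_mul, sub_self]

theorem existsUnique_degree_lt_X_pow_dvd_sub_shiftByRoot {K : Type*} [Field K] {g : K[X]}
    (hg : g.Separable) (m : ℕ) (F : (AdjoinRoot g)[X]) :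
    ∃! r : K[X], r.degree < (g ^ m).degree ∧ X ^ m ∣ F - shiftByRoot g r := by
  refine existsUnique_degree_lt_of_dvd_sub_iff (pow_ne_zero m hg.ne_zero)
    (exists_X_pow_dvd_sub_shiftByRoot hg m F) fun r s hr => ?_
  rw [← X_pow_dvd_shiftByRoot_iff hg, map_sub,
    ← dvd_add_right hr (c := shiftByRoot g r - shiftByRoot g s), sub_add_sub_cancel]

/-- The reduction `k[x,y] → (k[x]/(g))[y]`. -/
noncomputable def bivariateMap (g : R[X]) : MvPolynomial (Fin 2) R →ₐ[R] (AdjoinRoot g)[X] :=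
  (Polynomial.mapAlgHom (mkₐ g)).comp (Bivariate.equivMvPolynomial R).symm.toAlgHom

theorem mem_span_aeval_X_zero_X_one_pow_iff (g : R[X]) (m : ℕ) (P : MvPolynomial (Fin 2) R) :
    P ∈ Ideal.span {aeval (MvPolynomial.X 0) g, MvPolynomial.X 1 ^ m} ↔
      X ^ m ∣ bivariateMap g P := by
  set e := (Bivariate.equivMvPolynomial R).toRingEquiv
  have hspan : Ideal.span {aeval (MvPolynomial.X 0) g, MvPolynomial.X 1 ^ m} =
      Ideal.map e (Ideal.span {C g, X ^ m}) := by
    simp [e, Ideal.map_span, Set.image_pair, Bivariate.equivMvPolynomial_C]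
  rw [hspan, ← Ideal.comap_symm, Ideal.mem_comap, mem_span_C_X_pow_iff]
  rfl

theorem bivariateMap_aeval_X_zero_add_X_one (g r : R[X]) :
    bivariateMap g (aeval (MvPolynomial.X 0 + MvPolynomial.X 1) r) = shiftByRoot g r := by
  rw [← aeval_algHom_apply, shiftByRoot, add_comm]
  simp [bivariateMap]

end AdjoinRoot

theorem bivariate_congruence_interpolant_general
    {k : Type*} [Field k]
    (g : Polynomial k) (hg : g.Separable)
    (f : MvPolynomial (Fin 2) k) (m : ℕ) :
    ∃! r : Polynomial k,
      r.degree < ((m * g.natDegree : ℕ) : WithBot ℕ) ∧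
      f - Polynomial.aeval (MvPolynomial.X 0 + MvPolynomial.X 1) r ∈
        Ideal.span ({Polynomial.aeval (MvPolynomial.X 0) g,
          (MvPolynomial.X 1 : MvPolynomial (Fin 2) k) ^ m} : Set (MvPolynomial (Fin 2) k)) := by
  have hdeg : (g ^ m).degree = ((m * g.natDegree : ℕ) : WithBot ℕ) := by
    rw [degree_eq_natDegree (pow_ne_zero m hg.ne_zero), natDegree_pow]
  simp only [← hdeg, AdjoinRoot.mem_span_aeval_X_zero_X_one_pow_iff, map_sub,
    AdjoinRoot.bivariateMap_aeval_X_zero_add_X_one]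
  exact AdjoinRoot.existsUnique_degree_lt_X_pow_dvd_sub_shiftByRoot hg m _

theorem bivariate_congruence_interpolant
    {k : Type*} [Field k] [PerfectField k]
    (g : Polynomial k) (hg : g.Separable)
    (f : MvPolynomial (Fin 2) k) (m : ℕ) (hm : 0 < m) :
    ∃! r : Polynomial k,
      r.degree < ((m * g.natDegree : ℕ) : WithBot ℕ) ∧
      f - Polynomial.aeval (MvPolynomial.X 0 + MvPolynomial.X 1) r ∈
        Ideal.span ({Polynomial.aeval (MvPolynomial.X 0) g,
          (MvPolynomial.X 1 : MvPolynomial (Fin 2) k) ^ m} : Set (MvPolynomial (Fin 2) k)) :=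
  bivariate_congruence_interpolant_general g hg f m
end

section
/- Let k be a perfect field, S, N commuting elements of a k-algebra with p̂(S) = 0 for a separable polynomial p̂ ∈ k[x] and N^m = 0, and let r ∈ k[x] satisfy x ≡ r(x+y) modulo the ideal of k[x,y] generated by p̂(x) and y^m. Then r(S+N) = S. -/
open Polynomial

theorem aux_eval_congruence {k B : Type*} [Field k] [CommRing B] [Algebra k B]
    (s n : B) (phat : Polynomial k) (hs : Polynomial.aeval s phat = 0)
    (m : ℕ) (hn : n ^ m = 0) (r : Polynomial k)
    (hr : (MvPolynomial.X 0 : MvPolynomial (Fin 2) k) -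
            Polynomial.aeval (MvPolynomial.X 0 + MvPolynomial.X 1) r ∈
          Ideal.span ({Polynomial.aeval (MvPolynomial.X 0) phat,
            (MvPolynomial.X 1 : MvPolynomial (Fin 2) k) ^ m} : Set (MvPolynomial (Fin 2) k))) :
    Polynomial.aeval (s + n) r = s := by
  classical
  let f : MvPolynomial (Fin 2) k →ₐ[k] B := MvPolynomial.aeval ![s, n]
  have hX0 : f (MvPolynomial.X 0) = s := by simp [f]
  have hX1 : f (MvPolynomial.X 1) = n := by simp [f]
  obtain ⟨a, b, hab⟩ := Ideal.mem_span_pair.mp hr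
  have key : f ((MvPolynomial.X 0 : MvPolynomial (Fin 2) k) -
      Polynomial.aeval (MvPolynomial.X 0 + MvPolynomial.X 1) r) = 0 := by
    rw [← hab]
    have h1 : f (Polynomial.aeval (MvPolynomial.X 0) phat) = 0 := by
      rw [← Polynomial.aeval_algHom_apply, hX0, hs]
    simp [h1, map_pow, hX1, hn]
  rw [map_sub, sub_eq_zero, hX0, ← Polynomial.aeval_algHom_apply] at key
  rw [map_add, hX0, hX1] at key
  exact key.symm

theorem eval_congruence_recovers_semisimple_part
    {k 𝔸 : Type*} [Field k] [PerfectField k] [Ring 𝔸] [Algebra k 𝔸]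
    (S N : 𝔸) (hSN : Commute S N)
    (phat : Polynomial k) (hsep : phat.Separable)
    (hS : Polynomial.aeval S phat = 0)
    (m : ℕ) (hN : N ^ m = 0)
    (r : Polynomial k)
    (hr : (MvPolynomial.X 0 : MvPolynomial (Fin 2) k) -
            Polynomial.aeval (MvPolynomial.X 0 + MvPolynomial.X 1) r ∈
          Ideal.span ({Polynomial.aeval (MvPolynomial.X 0) phat,
            (MvPolynomial.X 1 : MvPolynomial (Fin 2) k) ^ m} : Set (MvPolynomial (Fin 2) k))) :
    Polynomial.aeval (S + N) r = S := by
  classical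
  have hcomm : ∀ a ∈ ({S, N} : Set 𝔸), ∀ b ∈ ({S, N} : Set 𝔸), a * b = b * a := by
    rintro a (rfl | rfl) b (rfl | rfl) <;> first | rfl | exact hSN | exact hSN.symm
  letI : CommRing (Algebra.adjoin k ({S, N} : Set 𝔸)) :=
    Algebra.adjoinCommRingOfComm k hcomm
  have hSmem : S ∈ Algebra.adjoin k ({S, N} : Set 𝔸) := Algebra.subset_adjoin (by simp)
  have hNmem : N ∈ Algebra.adjoin k ({S, N} : Set 𝔸) := Algebra.subset_adjoin (by simp)
  have hs : Polynomial.aeval (⟨S, hSmem⟩ : Algebra.adjoin k ({S, N} : Set 𝔸)) phat = 0 := by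
    apply Subtype.ext
    have := Polynomial.aeval_algHom_apply (Algebra.adjoin k ({S, N} : Set 𝔸)).val
      (⟨S, hSmem⟩ : Algebra.adjoin k ({S, N} : Set 𝔸)) phat
    simpa [hS] using this.symm
  have hn : (⟨N, hNmem⟩ : Algebra.adjoin k ({S, N} : Set 𝔸)) ^ m = 0 := by
    apply Subtype.ext
    simpa using hN
  have key := aux_eval_congruence (⟨S, hSmem⟩ : Algebra.adjoin k ({S, N} : Set 𝔸))
    ⟨N, hNmem⟩ phat hs m hn r hr
  have hcoe := congrArg (Algebra.adjoin k ({S, N} : Set 𝔸)).val key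
  rw [← Polynomial.aeval_algHom_apply] at hcoe
  simpa using hcoe
end
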